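/- arXiv:math/0012079 — 4 statements merged into one kernel-verified Lean document; each statement's English description precedes it below -/
import Mathlib

section
/- The determinant of the Jacobian matrix (∂c_i/∂x_j), where c_i is the i-th elementary symmetric polynomial in x_1,…,x_p, equals the Vandermonde product ∏_{i<j}(x_i − x_j). -/
open MvPolynomial Finset

/-!
Differentiating `e_{n+1} = e_{n+1}(x̂_j) + x_j e_n(x̂_j)`, where `x̂_j` omits `x_j`, gives
`∂e_{n+1}/∂x_j = e_n(x̂_j)`, and inverting the same recursion gives
`e_n(x̂_j) = ∑_{k ≤ n} e_{n-k} (-x_j)^k`. So the Jacobian factors as the unitriangular matrix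
`(e_{i-k})_{k ≤ i}` times the transposed Vandermonde matrix of `(-x_j)`, whose determinant is
`∏_{i<j} (x_i - x_j)`.
-/

theorem Multiset.esymm_cons_succ {R : Type*} [CommSemiring R] (a : R) (s : Multiset R) (n : ℕ) :
    (a ::ₘ s).esymm (n + 1) = s.esymm (n + 1) + a * s.esymm n := by
  simp [Multiset.esymm, Multiset.sum_map_mul_left]

theorem Multiset.esymm_eq_sum_esymm_cons {R : Type*} [CommRing R] (a : R) (s : Multiset R)
    (n : ℕ) : s.esymm n = ∑ k ∈ Finset.range (n + 1), (a ::ₘ s).esymm (n - k) * (-a) ^ k := by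
  induction n with
  | zero => simp [Multiset.esymm, Multiset.powersetCard_zero_left]
  | succ n ih =>
    rw [Finset.sum_range_succ', Nat.sub_zero, pow_zero, mul_one, Multiset.esymm_cons_succ, ih,
      Finset.mul_sum, add_left_comm, ← Finset.sum_add_distrib, Finset.sum_eq_zero, add_zero]
    intro k _
    rw [Nat.add_sub_add_right]
    ring

theorem Derivation.map_multiset_esymm_eq_zero {R A M : Type*} [CommSemiring R] [CommSemiring A]
    [Algebra R A] [AddCommMonoid M] [Module A M] [Module R M] (D : Derivation R A M)
    {s : Multiset A} (hs : ∀ a ∈ s, D a = 0) (n : ℕ) : D (s.esymm n) = 0 := by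
  induction s using Multiset.induction_on generalizing n with
  | empty => cases n <;> simp [Multiset.esymm, Multiset.powersetCard_zero_right]
  | cons a s ih =>
    cases n with
    | zero => simp [Multiset.esymm]
    | succ n =>
      have hs' : ∀ b ∈ s, D b = 0 := fun b hb => hs b (Multiset.mem_cons_of_mem hb)
      simp [Multiset.esymm_cons_succ, ih hs', hs a (Multiset.mem_cons_self a s)]

namespace MvPolynomial

variable {σ R : Type*} [Fintype σ]

theorem esymm_succ_eq_esymm_erase [DecidableEq σ] [CommSemiring R] (j : σ) (n : ℕ) :
    esymm σ R (n + 1) = ((univ.erase j).val.map X).esymm (n + 1) +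
      X j * ((univ.erase j).val.map X).esymm n := by
  rw [esymm_eq_multiset_esymm, ← Multiset.esymm_cons_succ, ← Multiset.map_cons, Finset.erase_val,
    Multiset.cons_erase (mem_univ_val j)]

theorem pderiv_esymm_succ [DecidableEq σ] [CommSemiring R] (j : σ) (n : ℕ) :
    pderiv j (esymm σ R (n + 1)) = ((univ.erase j).val.map X).esymm n := by
  have hconst : ∀ m, pderiv j (((univ.erase j).val.map X).esymm m : MvPolynomial σ R) = 0 :=
    (pderiv j).map_multiset_esymm_eq_zero <| by
      simp only [Multiset.mem_map, forall_exists_index, and_imp, forall_apply_eq_imp_iff₂]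
      exact fun k hk => pderiv_X_of_ne (Finset.ne_of_mem_erase hk)
  rw [esymm_succ_eq_esymm_erase j, map_add, pderiv_mul, hconst, hconst, pderiv_X_self]
  ring

theorem pderiv_esymm_succ_eq_sum [CommRing R] (j : σ) (n : ℕ) :
    pderiv j (esymm σ R (n + 1)) = ∑ k ∈ Finset.range (n + 1), esymm σ R (n - k) * (-X j) ^ k := by
  classical
  rw [pderiv_esymm_succ j, Multiset.esymm_eq_sum_esymm_cons (X j), ← Multiset.map_cons,
    Finset.erase_val, Multiset.cons_erase (mem_univ_val j), ← esymm_eq_multiset_esymm]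

end MvPolynomial

theorem Fin.sum_univ_ite_le {M : Type*} [AddCommMonoid M] {p : ℕ} (i : Fin p) (f : ℕ → M) :
    ∑ k : Fin p, (if k ≤ i then f k else 0) = ∑ k ∈ Finset.range (i + 1), f k := by
  simp only [Fin.le_iff_val_le_val]
  rw [Fin.sum_univ_eq_sum_range (fun k => if k ≤ (i : ℕ) then f k else 0), ← Finset.sum_filter]
  congr 1
  ext k
  simp only [mem_filter, mem_range]
  omega

/-- The determinant of the Jacobian matrix `(∂c_i/∂x_j)`, where `c_i` is the `i`-th
elementary symmetric polynomial in `x_1, …, x_p`, equals the Vandermonde product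
`∏_{i<j} (x_i - x_j)`. -/
theorem jacobian_esymm_det (p : ℕ) (R : Type*) [CommRing R] :
    (Matrix.of fun i j : Fin p =>
        MvPolynomial.pderiv j (MvPolynomial.esymm (Fin p) R ((i : ℕ) + 1))).det =
      ∏ i : Fin p, ∏ j ∈ Finset.Ioi i, (X i - X j) := by
  set A : Matrix (Fin p) (Fin p) (MvPolynomial (Fin p) R) :=
    Matrix.of fun i k => if k ≤ i then esymm (Fin p) R (i - k) else 0
  have hA : A.IsLowerTriangular := fun i k hik => if_neg (not_le.mpr hik)
  have hdiag : ∏ i, A i i = 1 := by simp [A, esymm_zero]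
  have hfactor : (Matrix.of fun i j : Fin p => pderiv j (esymm (Fin p) R ((i : ℕ) + 1))) =
      A * (Matrix.vandermonde fun j => -X j).transpose := by
    refine Matrix.ext fun i j => ?_
    simp only [A, Matrix.of_apply, Matrix.mul_apply, Matrix.transpose_apply,
      Matrix.vandermonde_apply, ite_mul, zero_mul, pderiv_esymm_succ_eq_sum]
    exact (Fin.sum_univ_ite_le i _).symm
  rw [hfactor, Matrix.det_mul, Matrix.det_transpose, Matrix.det_vandermonde,
    Matrix.det_of_isLowerTriangular A hA, hdiag, one_mul]
  simp only [neg_sub_neg]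
end

section
/- The poset C^q_{m,p} of quantum Plücker indices α^{(a)} (with α a p-subset of {1,…,m+p} and 0 ≤ a ≤ q), ordered by α^{(a)} ≤ β^{(b)} iff a ≤ b and α_i ≤ β_{b−a+i} for 1 ≤ i ≤ p−b+a, is a graded poset with rank function |α^{(a)}| = a(m+p) + ∑_i(α_i − i), and is a lattice. -/
open Finset

/-- A quantum Plücker index `α^{(a)}`: a strictly increasing sequence
`α = (α_1 < ⋯ < α_p)` in `{1, …, m+p}` together with a degree `0 ≤ a ≤ q`. -/
structure QPI (m p q : ℕ) where
  a : ℕ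
  ha : a ≤ q
  α : Fin p → ℕ
  mono : StrictMono α
  lower : ∀ i, 1 ≤ α i
  upper : ∀ i, α i ≤ m + p

/-- The partial order on quantum Plücker indices: `α^{(a)} ≤ β^{(b)}` iff `a ≤ b` and
`α_i ≤ β_{b-a+i}` for `1 ≤ i ≤ p - b + a` (here `0`-indexed). -/
def qle {m p q : ℕ} (x y : QPI m p q) : Prop :=
  x.a ≤ y.a ∧ ∀ (i : Fin p) (h : (i : ℕ) + (y.a - x.a) < p),
    x.α i ≤ y.α ⟨(i : ℕ) + (y.a - x.a), h⟩

/-- The rank `|α^{(a)}| = a(m+p) + ∑_i (α_i - i)`. -/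
def qrank {m p q : ℕ} (x : QPI m p q) : ℕ :=
  x.a * (m + p) + ∑ i : Fin p, (x.α i - ((i : ℕ) + 1))

/-- `x` is covered by `y`. -/
def qcovby {m p q : ℕ} (x y : QPI m p q) : Prop :=
  qle x y ∧ x ≠ y ∧ ∀ z, qle x z → qle z y → z = x ∨ z = y

/-- The minimal element `(1, 2, …, p)^{(0)}`. -/
def qmin (m p q : ℕ) : QPI m p q where
  a := 0
  ha := Nat.zero_le q
  α := fun i => (i : ℕ) + 1
  mono := fun _ _ h => Nat.succ_lt_succ h
  lower := fun _ => Nat.le_add_left 1 _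
  upper := fun i => by show (i : ℕ) + 1 ≤ m + p; have := i.isLt; omega

/-- The embedding `J` of the poset of quantum Plücker indices into increasing
integer sequences, defined via `a = p·l + r`, `0 ≤ r < p`. -/
def Jmap {m p q : ℕ} (x : QPI m p q) : Fin p → ℕ := fun k =>
  if h : (k : ℕ) + x.a % p < p then
    (x.a / p) * (m + p) + x.α ⟨(k : ℕ) + x.a % p, h⟩
  else
    (x.a / p + 1) * (m + p) + x.α ⟨(k : ℕ) + x.a % p - p, by
      have h1 := k.isLt
      have h2 : x.a % p < p := Nat.mod_lt _ k.pos
      omega⟩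

namespace QPIaux

variable {m p q : ℕ}

/-- Extended sequence. -/
def Ext (x : QPI m p q) (n : ℕ) : ℕ :=
  if h : 0 < p then n / p * (m + p) + x.α ⟨n % p, Nat.mod_lt _ h⟩ else 0

theorem qpi_ext {x y : QPI m p q} (h1 : x.a = y.a) (h2 : x.α = y.α) : x = y := by
  cases x; cases y
  cases h1; cases h2; rfl

theorem ext_spec (hp : 0 < p) (x : QPI m p q) (t j : ℕ) (hj : j < p) :
    Ext x (p * t + j) = t * (m + p) + x.α ⟨j, hj⟩ := by
  have hd : (p * t + j) / p = t := by rw [Nat.mul_add_div hp, Nat.div_eq_of_lt hj]; omega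
  have hm2 : (p * t + j) % p = j := by rw [Nat.mul_add_mod, Nat.mod_eq_of_lt hj]
  have hfin : (⟨(p * t + j) % p, Nat.mod_lt _ hp⟩ : Fin p) = ⟨j, hj⟩ := Fin.ext hm2
  rw [Ext, dif_pos hp, hfin, hd]

theorem decomp (hp : 0 < p) (n : ℕ) : n = p * (n / p) + n % p ∧ n % p < p :=
  ⟨(Nat.div_add_mod n p).symm, Nat.mod_lt _ hp⟩

theorem ext_add_p (hp : 0 < p) (x : QPI m p q) (n : ℕ) :
    Ext x (n + p) = Ext x n + (m + p) := by
  obtain ⟨hn, hn2⟩ := decomp hp n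
  have e1 : n + p = p * (n / p + 1) + n % p := by
    have : p * (n / p + 1) = p * (n / p) + p := by ring
    omega
  rw [e1, ext_spec hp x _ _ hn2]
  conv_rhs => rw [hn, ext_spec hp x _ _ hn2]
  have : (n / p + 1) * (m + p) = n / p * (m + p) + (m + p) := by ring
  omega

theorem ext_add_mul (hp : 0 < p) (x : QPI m p q) (n t : ℕ) :
    Ext x (n + p * t) = Ext x n + t * (m + p) := by
  induction t with
  | zero => simp
  | succ t ih =>
    have e : n + p * (t + 1) = (n + p * t) + p := by ring
    rw [e, ext_add_p hp, ih, Nat.add_mul]; ring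

theorem alpha_add_le (x : QPI m p q) (c : ℕ) : ∀ (i j : Fin p), (j : ℕ) = (i : ℕ) + c →
    x.α i + c ≤ x.α j := by
  induction c with
  | zero => intro i j h; have e : i = j := Fin.ext (by omega); rw [e]; omega
  | succ c ih =>
    intro i j h
    have hj' : (i : ℕ) + c < p := by have := j.isLt; omega
    have h1 := ih i ⟨(i : ℕ) + c, hj'⟩ rfl
    have h2 : x.α ⟨(i : ℕ) + c, hj'⟩ < x.α j := x.mono (by simp [Fin.lt_def]; omega)
    omega

theorem alpha_lb (hp : 0 < p) (x : QPI m p q) (i : Fin p) : (i : ℕ) + 1 ≤ x.α i := by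
  have h1 := alpha_add_le x (i : ℕ) ⟨0, hp⟩ i (by simp)
  have h2 := x.lower ⟨0, hp⟩
  omega

theorem alpha_ub (hp : 0 < p) (x : QPI m p q) (i : Fin p) : x.α i ≤ m + 1 + (i : ℕ) := by
  have hl : p - 1 < p := by omega
  have h1 := alpha_add_le x (p - 1 - (i : ℕ)) i ⟨p - 1, hl⟩ (by simp; have := i.isLt; omega)
  have h2 := x.upper ⟨p - 1, hl⟩
  have := i.isLt
  omega

theorem ext_lb (hp : 0 < p) (x : QPI m p q) (n : ℕ) :
    n / p * (m + p) + n % p + 1 ≤ Ext x n := by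
  rw [Ext, dif_pos hp]
  have := alpha_lb hp x ⟨n % p, Nat.mod_lt _ hp⟩
  simp only [Fin.val_mk] at this; omega

theorem ext_ub (hp : 0 < p) (x : QPI m p q) (n : ℕ) :
    Ext x n ≤ n / p * (m + p) + (m + n % p + 1) := by
  rw [Ext, dif_pos hp]
  have := alpha_ub hp x ⟨n % p, Nat.mod_lt _ hp⟩
  simp only [Fin.val_mk] at this; omega

theorem ext_ub' (hp : 0 < p) (x : QPI m p q) (n : ℕ) : Ext x n ≤ (n / p + 1) * (m + p) := by
  have h1 := ext_ub hp x n
  have h2 : n % p < p := Nat.mod_lt _ hp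
  have e : (n / p + 1) * (m + p) = n / p * (m+p) + (m + p) := by ring
  omega

theorem ext_succ_lt (hp : 0 < p) (x : QPI m p q) (n : ℕ) : Ext x n < Ext x (n + 1) := by
  obtain ⟨hn, hn2⟩ := decomp hp n
  by_cases h : n % p + 1 < p
  · have e1 : n + 1 = p * (n / p) + (n % p + 1) := by omega
    rw [e1, ext_spec hp x _ _ h]
    conv_lhs => rw [hn, ext_spec hp x _ _ hn2]
    have : x.α ⟨n % p, hn2⟩ < x.α ⟨n % p + 1, h⟩ := x.mono (by simp [Fin.lt_def])
    omega
  · have e1 : n + 1 = p * (n / p + 1) + 0 := by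
      have : p * (n / p + 1) = p * (n / p) + p := by ring
      omega
    rw [e1, ext_spec hp x _ _ hp]
    conv_lhs => rw [hn, ext_spec hp x _ _ hn2]
    have h1 := x.upper ⟨n % p, hn2⟩
    have h2 := x.lower ⟨0, hp⟩
    have e2 : (n / p + 1) * (m + p) = n / p * (m + p) + (m + p) := by ring
    omega

theorem ext_mono (hp : 0 < p) (x : QPI m p q) : StrictMono (Ext x) :=
  strictMono_nat_of_lt_succ (ext_succ_lt hp x)

theorem div_mod_spec (hp : 0 < p) (t j : ℕ) (hj : j < p) :
    (p * t + j) / p = t ∧ (p * t + j) % p = j := by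
  constructor
  · rw [Nat.mul_add_div hp, Nat.div_eq_of_lt hj]; omega
  · rw [Nat.mul_add_mod, Nat.mod_eq_of_lt hj]

theorem window_mod_inj (hp : 0 < p) (a : ℕ) {k k' : ℕ} (hk : k < p) (hk' : k' < p)
    (h : (k + a) % p = (k' + a) % p) : k = k' := by
  have h2 : k ≡ k' [MOD p] := Nat.ModEq.add_right_cancel' a h
  have h3 : k % p = k' % p := h2
  rwa [Nat.mod_eq_of_lt hk, Nat.mod_eq_of_lt hk'] at h3

theorem exists_window (hp : 0 < p) (a i : ℕ) (hi : i < p) :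
    ∃ k t, k < p ∧ k + a = p * t + i := by
  have hd := Nat.div_add_mod a p
  have hm2 : a % p < p := Nat.mod_lt _ hp
  by_cases hc : i < a % p
  · refine ⟨p - a % p + i, a / p + 1, by omega, ?_⟩
    have : p * (a / p + 1) = p * (a / p) + p := by ring
    omega
  · exact ⟨i - a % p, a / p, by omega, by omega⟩

theorem qle_ext_small (hp : 0 < p) {x y : QPI m p q} (h : qle x y) (j : ℕ) (hj : j < p) :
    x.α ⟨j, hj⟩ ≤ Ext y (j + (y.a - x.a)) := by
  by_cases hlt : j + (y.a - x.a) < p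
  · have he := ext_spec hp y 0 (j + (y.a - x.a)) hlt
    simp only [Nat.mul_zero, Nat.zero_add, Nat.zero_mul] at he
    rw [he]
    have := h.2 ⟨j, hj⟩ (by simpa using hlt)
    simpa using this
  · have h1 := ext_lb hp y (j + (y.a - x.a))
    have h2 := x.upper ⟨j, hj⟩
    have hge1 : 1 ≤ (j + (y.a - x.a)) / p := by
      rw [Nat.one_le_div_iff hp]; omega
    have h3 : (m + p) ≤ (j + (y.a - x.a)) / p * (m + p) :=
      le_mul_of_one_le_left (Nat.zero_le _) hge1
    omega

theorem qle_ext (hp : 0 < p) {x y : QPI m p q} (h : qle x y) (n : ℕ) :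
    Ext x n ≤ Ext y (n + (y.a - x.a)) := by
  have hn2 : n % p < p := Nat.mod_lt _ hp
  have hdm := Nat.div_add_mod n p
  have exx : Ext x n = n / p * (m + p) + x.α ⟨n % p, hn2⟩ := by
    rw [Ext, dif_pos hp]
  have e2 : n + (y.a - x.a) = (n % p + (y.a - x.a)) + p * (n / p) := by omega
  have eyy : Ext y (n + (y.a - x.a))
      = Ext y (n % p + (y.a - x.a)) + (n / p) * (m + p) := by
    rw [e2, ext_add_mul hp]
  have key := qle_ext_small hp h (n % p) hn2
  omega

theorem qle_window (hp : 0 < p) {x y : QPI m p q} (h : qle x y) :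
    ∀ k, k < p → Ext x (k + x.a) ≤ Ext y (k + y.a) := by
  intro k _
  have h1 := qle_ext hp h (k + x.a)
  have e : k + x.a + (y.a - x.a) = k + y.a := by have := h.1; omega
  rwa [e] at h1

theorem window_qle (hp : 0 < p) {x y : QPI m p q}
    (W : ∀ k, k < p → Ext x (k + x.a) ≤ Ext y (k + y.a)) : qle x y := by
  have hab : x.a ≤ y.a := by
    by_contra hab
    push_neg at hab
    have hdm := Nat.div_add_mod y.a p
    have hmlt : y.a % p < p := Nat.mod_lt _ hp
    have hkp : p - 1 - y.a % p < p := by omega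
    have e : (p - 1 - y.a % p) + y.a = p * (y.a / p) + (p - 1) := by omega
    have d1 : ((p - 1 - y.a % p) + y.a) / p = y.a / p := by
      rw [e]; exact (div_mod_spec hp _ _ (by omega)).1
    have d2 : ((p - 1 - y.a % p) + y.a) % p = p - 1 := by
      rw [e]; exact (div_mod_spec hp _ _ (by omega)).2
    have hub := ext_ub hp y ((p - 1 - y.a % p) + y.a)
    rw [d1, d2] at hub
    have hdiv : y.a / p + 1 ≤ ((p - 1 - y.a % p) + x.a) / p := by
      rw [Nat.le_div_iff_mul_le hp]
      have e5 : (y.a / p + 1) * p = p * (y.a / p) + p := by ring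
      omega
    have hlbx := ext_lb hp x ((p - 1 - y.a % p) + x.a)
    have h2 : (y.a / p + 1) * (m + p) ≤ ((p - 1 - y.a % p) + x.a) / p * (m + p) :=
      Nat.mul_le_mul_right _ hdiv
    have hW := W _ hkp
    have e4 : (y.a / p + 1) * (m + p) = (y.a / p) * (m + p) + (m + p) := by ring
    omega
  refine ⟨hab, ?_⟩
  intro i hi
  obtain ⟨k, t, hkp, hke⟩ := exists_window hp x.a (i : ℕ) i.isLt
  have hW := W k hkp
  have exx : Ext x (k + x.a) = t * (m + p) + x.α i := by
    rw [hke, ext_spec hp x t _ i.isLt]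
  have e2 : k + y.a = p * t + ((i : ℕ) + (y.a - x.a)) := by omega
  have eyy : Ext y (k + y.a) = t * (m + p) + y.α ⟨(i : ℕ) + (y.a - x.a), hi⟩ := by
    rw [e2, ext_spec hp y t _ hi]
  omega

theorem qle_iff (hp : 0 < p) {x y : QPI m p q} :
    qle x y ↔ ∀ k, k < p → Ext x (k + x.a) ≤ Ext y (k + y.a) :=
  ⟨qle_window hp, window_qle hp⟩

theorem qle_refl (x : QPI m p q) : qle x x := by
  refine ⟨le_refl _, fun i h => ?_⟩
  have e : (⟨(i : ℕ) + (x.a - x.a), h⟩ : Fin p) = i := Fin.ext (by simp)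
  rw [e]

theorem qle_trans (hp : 0 < p) {x y z : QPI m p q} (h1 : qle x y) (h2 : qle y z) :
    qle x z := by
  apply window_qle hp
  intro k hk
  exact le_trans (qle_window hp h1 k hk) (qle_window hp h2 k hk)

theorem qle_antisymm (hp : 0 < p) {x y : QPI m p q} (h1 : qle x y) (h2 : qle y x) :
    x = y := by
  have ha : x.a = y.a := le_antisymm h1.1 h2.1
  apply qpi_ext ha
  funext i
  have d1 : y.a - x.a = 0 := by omega
  have d2 : x.a - y.a = 0 := by omega
  have hi1 : (i : ℕ) + (y.a - x.a) < p := by rw [d1]; simpa using i.isLt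
  have hi2 : (i : ℕ) + (x.a - y.a) < p := by rw [d2]; simpa using i.isLt
  have g1 := h1.2 i hi1
  have g2 := h2.2 i hi2
  have e1 : (⟨(i : ℕ) + (y.a - x.a), hi1⟩ : Fin p) = i := Fin.ext (by simp [d1])
  have e2 : (⟨(i : ℕ) + (x.a - y.a), hi2⟩ : Fin p) = i := Fin.ext (by simp [d2])
  rw [e1] at g1; rw [e2] at g2
  omega

theorem ext_small (hp : 0 < p) (x : QPI m p q) {j : ℕ} (hj : j < p) :
    Ext x j = x.α ⟨j, hj⟩ := by
  have := ext_spec hp x 0 j hj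
  simpa using this

theorem sum_window (hp : 0 < p) (x : QPI m p q) (a' : ℕ) :
    ∑ k ∈ Finset.range p, Ext x (k + a')
      = a' * (m + p) + ∑ k ∈ Finset.range p, Ext x k := by
  induction a' with
  | zero => simp
  | succ a' ih =>
    have h2 : ∑ k ∈ Finset.range (p + 1), Ext x (k + a')
        = (∑ k ∈ Finset.range p, Ext x ((k + 1) + a')) + Ext x (0 + a') :=
      Finset.sum_range_succ' (fun k => Ext x (k + a')) p
    have h1 : ∑ k ∈ Finset.range (p + 1), Ext x (k + a')
        = (∑ k ∈ Finset.range p, Ext x (k + a')) + Ext x (p + a') :=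
      Finset.sum_range_succ (fun k => Ext x (k + a')) p
    have h3 : ∑ k ∈ Finset.range p, Ext x (k + (a' + 1))
        = ∑ k ∈ Finset.range p, Ext x ((k + 1) + a') := by
      apply Finset.sum_congr rfl
      intro k _
      congr 1
      omega
    have h4 : Ext x (p + a') = Ext x (0 + a') + (m + p) := by
      have e : p + a' = (0 + a') + p := by omega
      rw [e, ext_add_p hp]
    have h5 : (a' + 1) * (m + p) = a' * (m + p) + (m + p) := by ring
    omega

theorem rank_sum (hp : 0 < p) (x : QPI m p q) :
    qrank x + ∑ k ∈ Finset.range p, (k + 1)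
      = ∑ k ∈ Finset.range p, Ext x (k + x.a) := by
  have s1 : (∑ i : Fin p, (x.α i - ((i : ℕ) + 1))) + (∑ i : Fin p, ((i : ℕ) + 1))
      = ∑ i : Fin p, x.α i := by
    rw [← Finset.sum_add_distrib]
    apply Finset.sum_congr rfl
    intro i _
    have := alpha_lb hp x i
    omega
  have s2 : (∑ i : Fin p, ((i : ℕ) + 1)) = ∑ k ∈ Finset.range p, (k + 1) :=
    Fin.sum_univ_eq_sum_range (fun k => k + 1) p
  have s3 : (∑ i : Fin p, x.α i) = ∑ k ∈ Finset.range p, Ext x k := by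
    have e1 : (∑ i : Fin p, x.α i) = ∑ i : Fin p, Ext x (i : ℕ) := by
      apply Finset.sum_congr rfl
      intro i _
      rw [ext_small hp x i.isLt]
    rw [e1]
    exact Fin.sum_univ_eq_sum_range (fun k => Ext x k) p
  have s4 := sum_window hp x x.a
  rw [qrank] at *
  omega

theorem rank_succ_of_window (hp : 0 < p) {x z : QPI m p q} {ks : ℕ} (hks : ks < p)
    (ID : ∀ k, k < p → Ext z (k + z.a) = Ext x (k + x.a) + (if k = ks then 1 else 0)) :
    qrank z = qrank x + 1 := by
  have h1 : ∑ k ∈ Finset.range p, Ext z (k + z.a)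
      = (∑ k ∈ Finset.range p, Ext x (k + x.a)) + 1 := by
    have e : ∑ k ∈ Finset.range p, Ext z (k + z.a)
        = ∑ k ∈ Finset.range p, (Ext x (k + x.a) + (if k = ks then 1 else 0)) := by
      apply Finset.sum_congr rfl
      intro k hk
      exact ID k (Finset.mem_range.mp hk)
    rw [e, Finset.sum_add_distrib]
    congr 1
    rw [Finset.sum_ite_eq' (Finset.range p) ks (fun _ => 1)]
    simp [hks]
  have r1 := rank_sum hp x
  have r2 := rank_sum hp z
  omega

theorem bump_lt (hp : 0 < p) (x : QPI m p q) (i : Fin p) (hlt : x.α i < m + p)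
    (hmo : ∀ j : Fin p, (i : ℕ) < (j : ℕ) → x.α i + 1 < x.α j) :
    ∃ z : QPI m p q, z.a = x.a ∧
      ∀ n, Ext z n = Ext x n + (if n % p = (i : ℕ) then 1 else 0) := by
  refine ⟨⟨x.a, x.ha, Function.update x.α i (x.α i + 1), ?_, ?_, ?_⟩, rfl, ?_⟩
  · intro u v huv
    by_cases hu : u = i <;> by_cases hv : v = i
    · exfalso; rw [hu, hv] at huv; exact lt_irrefl _ huv
    · rw [hu, Function.update_self, Function.update_of_ne hv]
      exact hmo v (by rw [← hu]; exact huv)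
    · rw [Function.update_of_ne hu, hv, Function.update_self]
      have := x.mono (show u < i by rw [← hv]; exact huv)
      omega
    · rw [Function.update_of_ne hu, Function.update_of_ne hv]
      exact x.mono huv
  · intro j
    by_cases hj : j = i
    · rw [hj, Function.update_self]; have := x.lower i; omega
    · rw [Function.update_of_ne hj]; exact x.lower j
  · intro j
    by_cases hj : j = i
    · rw [hj, Function.update_self]; omega
    · rw [Function.update_of_ne hj]; exact x.upper j
  · intro n
    have hn2 : n % p < p := Nat.mod_lt _ hp
    rw [Ext, Ext, dif_pos hp, dif_pos hp]
    simp only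
    by_cases hni : n % p = (i : ℕ)
    · have e : (⟨n % p, hn2⟩ : Fin p) = i := Fin.ext hni
      rw [e, Function.update_self, if_pos hni]
      omega
    · have e : (⟨n % p, hn2⟩ : Fin p) ≠ i := fun hc => hni (by
        have := congrArg Fin.val hc; simpa using this)
      rw [Function.update_of_ne e, if_neg hni]
      simp

/-- the wrapped sequence `(1, α_0, …, α_{p-2})`. -/
def wrapSeq (x : QPI m p q) : Fin p → ℕ :=
  fun j => if hj : (j : ℕ) = 0 then 1 else x.α ⟨(j : ℕ) - 1, by have := j.isLt; omega⟩

theorem wrapSeq_zero (x : QPI m p q) (j : Fin p) (hj : (j : ℕ) = 0) :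
    wrapSeq x j = 1 := by rw [wrapSeq, dif_pos hj]

theorem wrapSeq_succ (x : QPI m p q) (j : Fin p) (hj : (j : ℕ) ≠ 0) :
    wrapSeq x j = x.α ⟨(j : ℕ) - 1, by have := j.isLt; omega⟩ := by
  rw [wrapSeq, dif_neg hj]

theorem bump_wrap (hp : 0 < p) (x : QPI m p q)
    (htop : x.α ⟨p - 1, by omega⟩ = m + p) (h2 : 2 ≤ x.α ⟨0, hp⟩)
    (hq : x.a + 1 ≤ q) :
    ∃ z : QPI m p q, z.a = x.a + 1 ∧
      ∀ n, Ext z (n + 1) = Ext x n + (if n % p = p - 1 then 1 else 0) := by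
  have hmono : StrictMono (wrapSeq x) := by
    intro u v huv
    have huv' : (u : ℕ) < (v : ℕ) := huv
    have hv : (v : ℕ) ≠ 0 := by omega
    rw [wrapSeq_succ x v hv]
    by_cases hu : (u : ℕ) = 0
    · rw [wrapSeq_zero x u hu]
      have h1 := alpha_add_le x ((v : ℕ) - 1) ⟨0, hp⟩ ⟨(v : ℕ) - 1, by have := v.isLt; omega⟩
        (by simp)
      omega
    · rw [wrapSeq_succ x u hu]
      apply x.mono
      simp only [Fin.lt_def, Fin.val_mk]
      omega
  have hlow : ∀ j, 1 ≤ wrapSeq x j := by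
    intro j
    by_cases hj : (j : ℕ) = 0
    · rw [wrapSeq_zero x j hj]
    · rw [wrapSeq_succ x j hj]; exact x.lower _
  have hup : ∀ j, wrapSeq x j ≤ m + p := by
    intro j
    by_cases hj : (j : ℕ) = 0
    · rw [wrapSeq_zero x j hj]; omega
    · rw [wrapSeq_succ x j hj]; exact x.upper _
  refine ⟨⟨x.a + 1, hq, wrapSeq x, hmono, hlow, hup⟩, rfl, ?_⟩
  intro n
  obtain ⟨hdm, hn2⟩ := decomp hp n
  have e2 : Ext x n = n / p * (m + p) + x.α ⟨n % p, hn2⟩ := by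
    rw [Ext, dif_pos hp]
  by_cases hj : n % p < p - 1
  · have hlt1 : n % p + 1 < p := by omega
    have e1 : n + 1 = p * (n / p) + (n % p + 1) := by omega
    rw [e1, ext_spec hp _ _ _ hlt1]
    show n / p * (m + p) + wrapSeq x ⟨n % p + 1, hlt1⟩
        = Ext x n + if n % p = p - 1 then 1 else 0
    have hw : wrapSeq x ⟨n % p + 1, hlt1⟩ = x.α ⟨n % p, hn2⟩ := by
      rw [wrapSeq_succ x ⟨n % p + 1, hlt1⟩ (by simp)]
      exact congrArg x.α (Fin.ext (by simp))
    rw [hw, if_neg (by omega), e2]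
    omega
  · have hj' : n % p = p - 1 := by omega
    have e1 : n + 1 = p * (n / p + 1) + 0 := by
      have : p * (n / p + 1) = p * (n / p) + p := by ring
      omega
    rw [e1, ext_spec hp _ _ _ hp]
    show (n / p + 1) * (m + p) + wrapSeq x ⟨0, hp⟩
        = Ext x n + if n % p = p - 1 then 1 else 0
    have hw : wrapSeq x ⟨0, hp⟩ = 1 := wrapSeq_zero x _ rfl
    have efin : (⟨n % p, hn2⟩ : Fin p) = ⟨p - 1, by omega⟩ := Fin.ext hj'
    rw [hw, if_pos hj', e2, efin, htop]
    have e3 : (n / p + 1) * (m + p) = n / p * (m + p) + (m + p) := by ring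
    omega

theorem finish_rank (hp : 0 < p) {x y z : QPI m p q} {ks : ℕ} (hksp : ks < p)
    (hstrict : Ext x (ks + x.a) < Ext y (ks + y.a))
    (W : ∀ k, k < p → Ext x (k + x.a) ≤ Ext y (k + y.a))
    (ID : ∀ k, k < p → Ext z (k + z.a) = Ext x (k + x.a) + (if k = ks then 1 else 0))
    (hmin : ∀ w, qle x w → qle w y → w = x ∨ w = y) :
    qrank y = qrank x + 1 := by
  have hxz : qle x z := window_qle hp (fun k hk => by rw [ID k hk]; omega)
  have hzy : qle z y := by
    apply window_qle hp
    intro k hk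
    rw [ID k hk]
    by_cases hkk : k = ks
    · subst hkk
      rw [if_pos rfl]
      omega
    · rw [if_neg hkk]
      have := W k hk
      omega
  have hrz : qrank z = qrank x + 1 := rank_succ_of_window hp hksp ID
  rcases hmin z hxz hzy with h | h
  · rw [h] at hrz; omega
  · rw [← h]; exact hrz

theorem cover_rank (hm : 1 ≤ m) (hp : 0 < p) {x y : QPI m p q} (hxy : qle x y)
    (hne : x ≠ y) (hmin : ∀ w, qle x w → qle w y → w = x ∨ w = y) :
    qrank y = qrank x + 1 := by
  have W := qle_window hp hxy
  have hT : ∃ k, k < p ∧ Ext x (k + x.a) < Ext y (k + y.a) := by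
    by_contra hc
    push_neg at hc
    have hyx : qle y x := window_qle hp (fun k hk => hc k hk)
    exact hne (qle_antisymm hp hxy hyx)
  have hKS : ∃ k, k < p ∧ Ext x (k + x.a) < Ext y (k + y.a)
      ∧ Ext x (k + x.a) + 1 < Ext x (k + x.a + 1) := by
    by_contra hc
    push_neg at hc
    have heq : ∀ k, k < p → Ext x (k + x.a) < Ext y (k + y.a) →
        Ext x (k + x.a + 1) = Ext x (k + x.a) + 1 := by
      intro k hk hs
      have h1 := ext_succ_lt hp x (k + x.a)
      have h2 := hc k hk hs
      omega
    have prop : ∀ c k, k < p → Ext x (k + x.a) < Ext y (k + y.a) → k + c < p →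
        Ext x (k + c + x.a) < Ext y (k + c + y.a)
        ∧ Ext x (k + c + x.a) = Ext x (k + x.a) + c := by
      intro c
      induction c with
      | zero =>
        intro k hk hs _
        simp only [Nat.add_zero]
        exact ⟨hs, trivial⟩
      | succ c ih =>
        intro k hk hs hkc
        obtain ⟨ih1, ih2⟩ := ih k hk hs (by omega)
        have he := heq (k + c) (by omega) ih1
        have e : k + (c + 1) + x.a = (k + c + x.a) + 1 := by omega
        have hnext : Ext x (k + (c + 1) + x.a) = Ext x (k + c + x.a) + 1 := by
          rw [e]; exact he
        have ey : k + (c + 1) + y.a = (k + c + y.a) + 1 := by omega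
        have hy : Ext y (k + c + y.a) < Ext y (k + (c + 1) + y.a) := by
          rw [ey]; exact ext_succ_lt hp y (k + c + y.a)
        exact ⟨by omega, by omega⟩
    obtain ⟨k0, hk0, hs0⟩ := hT
    obtain ⟨hsp, _⟩ := prop (p - 1 - k0) k0 hk0 hs0 (by omega)
    have e1 : k0 + (p - 1 - k0) = p - 1 := by omega
    rw [e1] at hsp
    have hwrap := heq (p - 1) (by omega) hsp
    have ex : Ext x (p - 1 + x.a + 1) = Ext x (0 + x.a) + (m + p) := by
      have e : p - 1 + x.a + 1 = (0 + x.a) + p := by omega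
      rw [e, ext_add_p hp]
    have hy : Ext y (p - 1 + y.a) < Ext y (0 + y.a) + (m + p) := by
      have h1 : Ext y (p - 1 + y.a) < Ext y ((0 + y.a) + p) := ext_mono hp y (by omega)
      rwa [ext_add_p hp] at h1
    have hs0' : Ext x (0 + x.a) < Ext y (0 + y.a) := by omega
    obtain ⟨_, htel⟩ := prop (p - 1) 0 (by omega) hs0' (by omega)
    have e2 : 0 + (p - 1) + x.a = p - 1 + x.a := by omega
    rw [e2] at htel
    omega
  obtain ⟨ks, hksp, hstrict, hgap⟩ := hKS
  obtain ⟨hdm, hi2⟩ := decomp hp (ks + x.a)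
  have exx : Ext x (ks + x.a)
      = (ks + x.a) / p * (m + p) + x.α ⟨(ks + x.a) % p, hi2⟩ := by
    rw [Ext, dif_pos hp]
  by_cases hcase : x.α ⟨(ks + x.a) % p, hi2⟩ < m + p
  · -- non-wrap bump
    have hmo : ∀ j : Fin p, (ks + x.a) % p < (j : ℕ) →
        x.α ⟨(ks + x.a) % p, hi2⟩ + 1 < x.α j := by
      intro j hji
      have hi1 : (ks + x.a) % p + 1 < p := by have := j.isLt; omega
      have e : ks + x.a + 1 = p * ((ks + x.a) / p) + ((ks + x.a) % p + 1) := by omega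
      have h1 : Ext x (ks + x.a + 1)
          = (ks + x.a) / p * (m + p) + x.α ⟨(ks + x.a) % p + 1, hi1⟩ := by
        rw [e, ext_spec hp _ _ _ hi1]
      have h3 : x.α ⟨(ks + x.a) % p + 1, hi1⟩ ≤ x.α j :=
        x.mono.monotone (show (⟨(ks + x.a) % p + 1, hi1⟩ : Fin p) ≤ j by
          simp only [Fin.le_def, Fin.val_mk]; omega)
      omega
    obtain ⟨z, hza, hz⟩ := bump_lt hp x ⟨(ks + x.a) % p, hi2⟩ hcase hmo
    have ID : ∀ k, k < p →
        Ext z (k + z.a) = Ext x (k + x.a) + (if k = ks then 1 else 0) := by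
      intro k hk
      rw [hza, hz (k + x.a)]
      congr 1
      by_cases hkk : k = ks
      · subst hkk; simp
      · rw [if_neg (fun hc2 => hkk (window_mod_inj hp x.a hk hksp hc2)), if_neg hkk]
    exact finish_rank hp hksp hstrict W ID hmin
  · -- wrap bump
    have hcase' : x.α ⟨(ks + x.a) % p, hi2⟩ = m + p := by
      have := x.upper ⟨(ks + x.a) % p, hi2⟩; omega
    have hip : (ks + x.a) % p = p - 1 := by
      by_contra hne2
      have hi1 : (ks + x.a) % p + 1 < p := by omega
      have h1 := x.mono (show (⟨(ks + x.a) % p, hi2⟩ : Fin p) < ⟨(ks + x.a) % p + 1, hi1⟩ by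
        simp only [Fin.lt_def, Fin.val_mk]; omega)
      have h2 := x.upper ⟨(ks + x.a) % p + 1, hi1⟩
      omega
    have h20 : 2 ≤ x.α ⟨0, hp⟩ := by
      have e : ks + x.a + 1 = p * ((ks + x.a) / p + 1) + 0 := by
        have : p * ((ks + x.a) / p + 1) = p * ((ks + x.a) / p) + p := by ring
        omega
      have h1 : Ext x (ks + x.a + 1)
          = ((ks + x.a) / p + 1) * (m + p) + x.α ⟨0, hp⟩ := by
        rw [e, ext_spec hp _ _ _ hp]
      have e3 : ((ks + x.a) / p + 1) * (m + p) = (ks + x.a) / p * (m + p) + (m + p) := by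
        ring
      omega
    have hab : x.a < y.a := by
      have hub := ext_ub hp y (ks + y.a)
      have hmod : (ks + y.a) % p < p := Nat.mod_lt _ hp
      have hmul : (ks + x.a) / p * (m + p) < (ks + y.a) / p * (m + p) := by omega
      have hdivlt : (ks + x.a) / p < (ks + y.a) / p := by
        by_contra hc2
        push_neg at hc2
        have := Nat.mul_le_mul_right (m + p) hc2
        omega
      by_contra hc3
      push_neg at hc3
      have h4 : (ks + y.a) / p ≤ (ks + x.a) / p :=
        Nat.div_le_div_right (by omega)
      omega
    have htop : x.α ⟨p - 1, by omega⟩ = m + p := by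
      have efin : (⟨(ks + x.a) % p, hi2⟩ : Fin p) = ⟨p - 1, by omega⟩ := Fin.ext hip
      rw [← efin]; exact hcase'
    obtain ⟨z, hza, hz⟩ := bump_wrap hp x htop h20 (le_trans (by omega) y.ha)
    have ID : ∀ k, k < p →
        Ext z (k + z.a) = Ext x (k + x.a) + (if k = ks then 1 else 0) := by
      intro k hk
      rw [hza]
      have e : k + (x.a + 1) = (k + x.a) + 1 := by omega
      rw [e, hz (k + x.a)]
      congr 1
      by_cases hkk : k = ks
      · subst hkk; simp [hip]
      · rw [if_neg (fun hc2 => hkk (window_mod_inj hp x.a hk hksp (by rw [hc2, hip]))),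
          if_neg hkk]
    exact finish_rank hp hksp hstrict W ID hmin

/-- candidate meet sequence -/
def minSeq (x y : QPI m p q) : Fin p → ℕ :=
  fun i => min (x.α i) (Ext y ((i : ℕ) + (y.a - x.a)))

theorem meet_aux (hp : 0 < p) (x y : QPI m p q) (hab : x.a ≤ y.a) :
    ∃ z, qle z x ∧ qle z y ∧ ∀ w, qle w x → qle w y → qle w z := by
  have hext1 : ∀ n, 1 ≤ Ext y n := by
    intro n
    have := ext_lb hp y n
    omega
  have hmono : StrictMono (minSeq x y) := by
    intro u v huv
    have h1 : x.α u < x.α v := x.mono huv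
    have h2 : Ext y ((u : ℕ) + (y.a - x.a)) < Ext y ((v : ℕ) + (y.a - x.a)) :=
      ext_mono hp y (by have : (u : ℕ) < (v : ℕ) := huv; omega)
    exact lt_min ((min_le_left _ _).trans_lt h1) ((min_le_right _ _).trans_lt h2)
  have hlow : ∀ i, 1 ≤ minSeq x y i :=
    fun i => le_min (x.lower i) (hext1 _)
  have hup : ∀ i, minSeq x y i ≤ m + p :=
    fun i => le_trans (min_le_left _ _) (x.upper i)
  set z : QPI m p q := ⟨x.a, x.ha, minSeq x y, hmono, hlow, hup⟩ with hzdef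
  have hza : z.a = x.a := rfl
  have E : ∀ n, Ext z n = min (Ext x n) (Ext y (n + (y.a - x.a))) := by
    intro n
    have hn2 : n % p < p := Nat.mod_lt _ hp
    have hdm := Nat.div_add_mod n p
    have hEz : Ext z n = n / p * (m + p) + minSeq x y ⟨n % p, hn2⟩ := by
      rw [Ext, dif_pos hp]
    have hEx : Ext x n = n / p * (m + p) + x.α ⟨n % p, hn2⟩ := by
      rw [Ext, dif_pos hp]
    have e2 : n + (y.a - x.a) = (n % p + (y.a - x.a)) + p * (n / p) := by omega
    have hEy : Ext y (n + (y.a - x.a))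
        = Ext y (n % p + (y.a - x.a)) + n / p * (m + p) := by
      rw [e2, ext_add_mul hp]
    rw [hEz, hEx, hEy]; simp only [minSeq]
    rw [add_comm (Ext y (n % p + (y.a - x.a))) (n / p * (m + p)),
      min_add_add_left]
  refine ⟨z, ?_, ?_, ?_⟩
  · apply window_qle hp
    intro k hk
    rw [hza, E (k + x.a)]
    exact le_trans (min_le_left _ _) (le_refl _)
  · apply window_qle hp
    intro k hk
    rw [hza, E (k + x.a)]
    have e : k + x.a + (y.a - x.a) = k + y.a := by omega
    rw [e]
    exact min_le_right _ _
  · intro w hw1 hw2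
    apply window_qle hp
    intro k hk
    rw [hza, E (k + x.a)]
    have e : k + x.a + (y.a - x.a) = k + y.a := by omega
    rw [e]
    exact le_min (qle_window hp hw1 k hk) (qle_window hp hw2 k hk)

/-- candidate join sequence -/
def maxSeq (x y : QPI m p q) : Fin p → ℕ :=
  fun i => max (y.α i + (y.a - x.a) * (m + p))
    (Ext x ((i : ℕ) + (y.a - x.a) * (p - 1))) - (y.a - x.a) * (m + p)

theorem join_aux (hp : 0 < p) (x y : QPI m p q) (hab : x.a ≤ y.a) :
    ∃ z, qle x z ∧ qle y z ∧ ∀ w, qle x w → qle y w → qle z w := by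
  have hmono : StrictMono (maxSeq x y) := by
    intro u v huv
    have h1 : y.α u + (y.a - x.a) * (m + p) < y.α v + (y.a - x.a) * (m + p) := by
      have := y.mono huv; omega
    have h2 : Ext x ((u : ℕ) + (y.a - x.a) * (p - 1))
        < Ext x ((v : ℕ) + (y.a - x.a) * (p - 1)) :=
      ext_mono hp x (by have : (u : ℕ) < (v : ℕ) := huv; omega)
    have h3 := max_lt_max h1 h2
    have h4 : (y.a - x.a) * (m + p) ≤ max (y.α u + (y.a - x.a) * (m + p))
        (Ext x ((u : ℕ) + (y.a - x.a) * (p - 1))) :=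
      le_trans (Nat.le_add_left _ _) (le_max_left _ _)
    simp only [maxSeq]
    omega
  have hlow : ∀ i, 1 ≤ maxSeq x y i := by
    intro i
    have h1 : y.α i + (y.a - x.a) * (m + p) ≤ max (y.α i + (y.a - x.a) * (m + p))
        (Ext x ((i : ℕ) + (y.a - x.a) * (p - 1))) := le_max_left _ _
    have := y.lower i
    simp only [maxSeq]
    omega
  have hup : ∀ i, maxSeq x y i ≤ m + p := by
    intro i
    have hd1 : ((i : ℕ) + (y.a - x.a) * (p - 1)) / p < (y.a - x.a) + 1 := by
      rw [Nat.div_lt_iff_lt_mul hp]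
      have e1 : (y.a - x.a) * (p - 1) + (y.a - x.a) = (y.a - x.a) * p := by
        rw [← Nat.mul_succ]
        congr 1
        omega
      have e2 : ((y.a - x.a) + 1) * p = (y.a - x.a) * p + p := by ring
      have := i.isLt
      omega
    have hb := ext_ub' hp x ((i : ℕ) + (y.a - x.a) * (p - 1))
    have hb2 : (((i : ℕ) + (y.a - x.a) * (p - 1)) / p + 1) * (m + p)
        ≤ ((y.a - x.a) + 1) * (m + p) :=
      Nat.mul_le_mul_right _ (by omega)
    have e3 : ((y.a - x.a) + 1) * (m + p) = (y.a - x.a) * (m + p) + (m + p) := by ring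
    have hαub := y.upper i
    have hmax : max (y.α i + (y.a - x.a) * (m + p))
        (Ext x ((i : ℕ) + (y.a - x.a) * (p - 1))) ≤ (y.a - x.a) * (m + p) + (m + p) :=
      max_le (by omega) (by omega)
    simp only [maxSeq]
    omega
  set z : QPI m p q := ⟨y.a, y.ha, maxSeq x y, hmono, hlow, hup⟩ with hzdef
  have hza : z.a = y.a := rfl
  have E : ∀ n, Ext z (n + (y.a - x.a))
      = max (Ext x n) (Ext y (n + (y.a - x.a))) := by
    intro n
    have hn2 : n % p < p := Nat.mod_lt _ hp
    have hdm := Nat.div_add_mod n p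
    have hjd := Nat.div_add_mod (n % p + (y.a - x.a)) p
    have hjd2 : (n % p + (y.a - x.a)) % p < p := Nat.mod_lt _ hp
    have hsD : (n % p + (y.a - x.a)) / p ≤ (y.a - x.a) := by
      by_contra hc
      push_neg at hc
      have h1 : p * ((y.a - x.a) + 1) ≤ p * ((n % p + (y.a - x.a)) / p) :=
        Nat.mul_le_mul_left _ hc
      have h2 : (y.a - x.a) ≤ p * (y.a - x.a) := Nat.le_mul_of_pos_left _ hp
      have e : p * ((y.a - x.a) + 1) = p * (y.a - x.a) + p := by ring
      omega
    -- decompose n + D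
    have e1 : n + (y.a - x.a)
        = p * (n / p + (n % p + (y.a - x.a)) / p) + (n % p + (y.a - x.a)) % p := by
      have e : p * (n / p + (n % p + (y.a - x.a)) / p)
          = p * (n / p) + p * ((n % p + (y.a - x.a)) / p) := by ring
      omega
    have hEz : Ext z (n + (y.a - x.a))
        = (n / p + (n % p + (y.a - x.a)) / p) * (m + p)
          + maxSeq x y ⟨(n % p + (y.a - x.a)) % p, hjd2⟩ := by
      rw [e1, ext_spec hp _ _ _ hjd2]
    have hEy : Ext y (n + (y.a - x.a))
        = (n / p + (n % p + (y.a - x.a)) / p) * (m + p)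
          + y.α ⟨(n % p + (y.a - x.a)) % p, hjd2⟩ := by
      rw [e1, ext_spec hp _ _ _ hjd2]
    have hEx : Ext x n = n / p * (m + p) + x.α ⟨n % p, hn2⟩ := by
      rw [Ext, dif_pos hp]
    have hExts : Ext x ((n % p + (y.a - x.a)) % p + (y.a - x.a) * (p - 1))
        = Ext x (n % p) + ((y.a - x.a) - (n % p + (y.a - x.a)) / p) * (m + p) := by
      have e2 : (n % p + (y.a - x.a)) % p + (y.a - x.a) * (p - 1)
          = n % p + p * ((y.a - x.a) - (n % p + (y.a - x.a)) / p) := by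
        have e3 : (y.a - x.a) * (p - 1) + (y.a - x.a) = (y.a - x.a) * p := by
          rw [← Nat.mul_succ]; congr 1; omega
        have e4 : p * ((y.a - x.a) - (n % p + (y.a - x.a)) / p) + p * ((n % p + (y.a - x.a)) / p)
            = p * (y.a - x.a) := by
          rw [← Nat.mul_add]
          congr 1
          omega
        have e5 : (y.a - x.a) * p = p * (y.a - x.a) := by ring
        omega
      rw [e2, ext_add_mul hp]
    have hExn : Ext x (n % p) = x.α ⟨n % p, hn2⟩ := ext_small hp x hn2
    -- put it together
    rw [hEz, hEy, hEx]
    simp only [maxSeq]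
    rw [hExts, hExn]
    -- linear arithmetic with product atoms
    have p1 : (n / p + (n % p + (y.a - x.a)) / p) * (m + p)
        = n / p * (m + p) + ((n % p + (y.a - x.a)) / p) * (m + p) := by ring
    have p2 : ((y.a - x.a) - (n % p + (y.a - x.a)) / p) * (m + p)
        + ((n % p + (y.a - x.a)) / p) * (m + p) = (y.a - x.a) * (m + p) := by
      rw [← Nat.add_mul]
      congr 1
      omega
    rcases max_cases (y.α ⟨(n % p + (y.a - x.a)) % p, hjd2⟩ + (y.a - x.a) * (m + p))
      (x.α ⟨n % p, hn2⟩ + ((y.a - x.a) - (n % p + (y.a - x.a)) / p) * (m + p))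
      with ⟨hm1, hc1⟩ | ⟨hm1, hc1⟩ <;>
    rcases max_cases (n / p * (m + p) + x.α ⟨n % p, hn2⟩)
      ((n / p + (n % p + (y.a - x.a)) / p) * (m + p)
        + y.α ⟨(n % p + (y.a - x.a)) % p, hjd2⟩)
      with ⟨hm2, hc2⟩ | ⟨hm2, hc2⟩ <;>
    rw [hm1, hm2] <;> omega
  refine ⟨z, ?_, ?_, ?_⟩
  · apply window_qle hp
    intro k hk
    have e : k + x.a + (y.a - x.a) = k + y.a := by omega
    have h1 := E (k + x.a)
    rw [e] at h1
    rw [hza, h1]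
    exact le_max_left _ _
  · apply window_qle hp
    intro k hk
    have e : k + x.a + (y.a - x.a) = k + y.a := by omega
    have h1 := E (k + x.a)
    rw [e] at h1
    rw [hza, h1]
    exact le_max_right _ _
  · intro w hw1 hw2
    apply window_qle hp
    intro k hk
    have e : k + x.a + (y.a - x.a) = k + y.a := by omega
    have h1 := E (k + x.a)
    rw [e] at h1
    rw [hza, h1]
    exact max_le (qle_window hp hw1 k hk) (qle_window hp hw2 k hk)

end QPIaux


/-- The poset `C^q_{m,p}` of quantum Plücker indices is a partial order, is graded
with rank function `|α^{(a)}| = a(m+p) + ∑_i (α_i - i)` (covers raise rank by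
exactly one), and is a lattice (every pair has a greatest lower bound and a least
upper bound). -/
theorem quantum_pluecker_poset_graded_lattice (m p q : ℕ) (hm : 1 ≤ m) (hp : 1 ≤ p) :
    IsPartialOrder (QPI m p q) qle ∧
    (∀ x y : QPI m p q, qcovby x y → qrank y = qrank x + 1) ∧
    (∀ x y : QPI m p q, ∃ z, qle z x ∧ qle z y ∧ ∀ w, qle w x → qle w y → qle w z) ∧
    (∀ x y : QPI m p q, ∃ z, qle x z ∧ qle y z ∧ ∀ w, qle x w → qle y w → qle z w) := by
  have hp0 : 0 < p := hp
  refine ⟨?_, ?_, ?_, ?_⟩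
  · exact
      { refl := QPIaux.qle_refl
        trans := fun x y z h1 h2 => QPIaux.qle_trans hp0 h1 h2
        antisymm := fun x y h1 h2 => QPIaux.qle_antisymm hp0 h1 h2 }
  · intro x y hc
    exact QPIaux.cover_rank hm hp0 hc.1 hc.2.1 hc.2.2
  · intro x y
    rcases le_total x.a y.a with h | h
    · exact QPIaux.meet_aux hp0 x y h
    · obtain ⟨z, h1, h2, h3⟩ := QPIaux.meet_aux hp0 y x h
      exact ⟨z, h2, h1, fun w hw1 hw2 => h3 w hw2 hw1⟩
  · intro x y
    rcases le_total x.a y.a with h | h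
    · exact QPIaux.join_aux hp0 x y h
    · obtain ⟨z, h1, h2, h3⟩ := QPIaux.join_aux hp0 y x h
      exact ⟨z, h2, h1, fun w hw1 hw2 => h3 w hw2 hw1⟩
end

section
/- For any sequence K = (k_1,…,k_p) of integers, the alternant f(K) = det(x_i^{n−k_j})_{1≤i,j≤p} satisfies the Pieri-type recursion (x_1 + ⋯ + x_p)·f(K) = ∑_{a=1}^p f(k_1,…,k_a−1,…,k_p). -/
open Finset

/-- The alternant `f(K) = det(x_i^{n-k_j})` satisfies the Pieri-type recursion
`(x_1 + ⋯ + x_p) · f(K) = ∑_{a=1}^p f(k_1, …, k_a - 1, …, k_p)`. -/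
theorem alternant_pieri_recursion (p n : ℕ) (R : Type*) [CommRing R]
    (x : Fin p → R) (K : Fin p → ℕ) (hK : ∀ j, 1 ≤ K j ∧ K j ≤ n) :
    (∑ i : Fin p, x i) * (Matrix.of fun i j : Fin p => x i ^ (n - K j)).det =
      ∑ a : Fin p,
        (Matrix.of fun i j : Fin p => x i ^ (n - Function.update K a (K a - 1) j)).det := by
  have key : ∀ σ : Equiv.Perm (Fin p),
      (∑ i, x i) * ∏ j, x (σ j) ^ (n - K j)
        = ∑ a, ∏ j, x (σ j) ^ (n - Function.update K a (K a - 1) j) := by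
    intro σ
    rw [← Equiv.sum_comp σ x, Finset.sum_mul]
    refine Finset.sum_congr rfl fun a _ => ?_
    rw [← Finset.mul_prod_erase univ (fun j => x (σ j) ^ (n - K j)) (mem_univ a),
        ← Finset.mul_prod_erase univ
          (fun j => x (σ j) ^ (n - Function.update K a (K a - 1) j)) (mem_univ a),
        ← mul_assoc]
    congr 1
    · rw [Function.update_self]
      have h1 : n - (K a - 1) = (n - K a) + 1 := by
        have := hK a; omega
      rw [h1, pow_succ, mul_comm]
    · exact Finset.prod_congr rfl fun j hj => by
        rw [Function.update_of_ne (Finset.ne_of_mem_erase hj)]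
  simp only [Matrix.det_apply, Matrix.of_apply]
  rw [Finset.mul_sum, Finset.sum_comm]
  refine Finset.sum_congr rfl fun σ _ => ?_
  rw [mul_smul_comm, key, Finset.smul_sum]
end

section
/- Let n = m+p and let y_1,…,y_n be the n-th roots of (−1)^{p+1}. For a strictly increasing sequence K = (k_1 < ⋯ < k_p) of positive integers with ∑_j(k_j − j) = 0 and k_p < k_1 + n, define D(K) = ((−1)^{\binom{p}{2}}/n^p) ∑ (x_1⋯x_p)(x_1+⋯+x_p)^{∑_j k_j − j} det(x_j^{n−k_i}) det(x_i^{p−j}), the sum over all p-element subsets {x_1,…,x_p} ⊂ {y_1,…,y_n} taken in a fixed order. Then D(K) = 1 if K = (1,2,…,p) and D(K) = 0 otherwise. -/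
/-!
Once the hypotheses force `K = (1, …, p)`, the factor `(x₁ + ⋯ + xₚ)^0` disappears and, after
absorbing `x₁ ⋯ xₚ` into the second determinant, the sum defining `D(K)` is the Cauchy–Binet
expansion of `det (A Bᵀ)` with `A = (y^{n-i})` and `B = (y^{p+1-j})`. The entries of `A Bᵀ` are
power sums `∑ y^{n+d}` with `|d| < n`; multiplication by a primitive `n`-th root of unity permutes
the `y`'s, so these vanish unless `d = 0`, where they equal `n (-1)^{p+1}`. Hence `A Bᵀ` is
`n (-1)^{p+1}` times the order-reversing permutation matrix, whose determinant `(-1)^{C(p,2)}`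
cancels the normalising constant.
-/

open Finset

/-- The function `D(K)` of formula (fnD):
`D(K) = ((-1)^{C(p,2)}/n^p) ∑ (x_1⋯x_p)(x_1+⋯+x_p)^{∑_j k_j - j}
  det(x_j^{n-k_i}) det(x_i^{p-j})`,
the sum over all `p`-element subsets `{x_1, …, x_p}` of the roots `{y_1, …, y_n}`,
each taken in the fixed order (i.e. over strictly increasing selections). -/
noncomputable def Dfun (m p : ℕ) (y : Fin (m + p) → ℂ) (K : Fin p → ℤ) : ℂ :=
  ((-1 : ℂ) ^ Nat.choose p 2 / ((m + p : ℕ) : ℂ) ^ p) *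
    ∑ c ∈ Finset.univ.filter (fun c : Fin p → Fin (m + p) =>
        ∀ i j : Fin p, i < j → c i < c j),
      (∏ j : Fin p, y (c j)) *
        (∑ j : Fin p, y (c j)) ^ (∑ j : Fin p, (K j - ((j : ℕ) + 1))) *
        (Matrix.of fun i j : Fin p => y (c j) ^ (((m + p : ℕ) : ℤ) - K i)).det *
        (Matrix.of fun i j : Fin p => y (c i) ^ ((p : ℤ) - 1 - (j : ℕ))).det

open Polynomial
open scoped Matrix

theorem StrictMono.val_add_one_le {p : ℕ} {K : Fin p → ℤ} (hK : StrictMono K)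
    (hpos : ∀ j, 1 ≤ K j) (j : Fin p) : (j : ℤ) + 1 ≤ K j := by
  obtain ⟨j, hj⟩ := j
  induction j with
  | zero => simpa using hpos ⟨0, hj⟩
  | succ j ih =>
    have hstep : K ⟨j, by omega⟩ < K ⟨j + 1, hj⟩ := hK (Nat.lt_succ_self j)
    push_cast
    linarith [ih (by omega)]

theorem StrictMono.eq_val_add_one_of_sum_eq_zero {p : ℕ} {K : Fin p → ℤ} (hK : StrictMono K)
    (hpos : ∀ j, 1 ≤ K j) (hsum : ∑ j, (K j - ((j : ℕ) + 1)) = 0) (j : Fin p) :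
    K j = (j : ℕ) + 1 := by
  have hnonneg : ∀ i ∈ univ, 0 ≤ K i - ((i : ℕ) + 1) := fun i _ =>
    sub_nonneg.mpr (hK.val_add_one_le hpos i)
  linarith [(sum_eq_zero_iff_of_nonneg hnonneg).mp hsum j (mem_univ j)]

theorem Fin.sign_revPerm (p : ℕ) :
    Equiv.Perm.sign (Fin.revPerm : Equiv.Perm (Fin p)) = (-1) ^ p.choose 2 := by
  rw [Equiv.Perm.sign_eq_prod_prod_Iio]
  calc ∏ j : Fin p, ∏ i ∈ Iio j, (if Fin.revPerm i < Fin.revPerm j then 1 else -1)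
      = ∏ j : Fin p, (-1 : ℤˣ) ^ (j : ℕ) := by
        refine prod_congr rfl fun j _ => ?_
        rw [prod_congr rfl fun i hi => if_neg (by simpa using (mem_Iio.mp hi).le),
          Finset.prod_const, Fin.card_Iio]
    _ = (-1) ^ p.choose 2 := by
        rw [prod_pow_eq_pow_sum, Fin.sum_univ_eq_sum_range (fun j => j), sum_range_id,
          Nat.choose_two_right]

open Classical in
theorem Finset.sum_eq_sum_strictMono_sum_perm {ι M : Type*} [Fintype ι] [LinearOrder ι]
    [AddCommMonoid M] {p : ℕ} (F : (Fin p → ι) → M)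
    (hF : ∀ g, ¬ Function.Injective g → F g = 0) :
    ∑ g, F g = ∑ c ∈ univ.filter (fun c : Fin p → ι => StrictMono c),
      ∑ σ : Equiv.Perm (Fin p), F (c ∘ σ) := by
  rw [← sum_product']
  have hinj : Set.InjOn (fun cσ : (Fin p → ι) × Equiv.Perm (Fin p) => cσ.1 ∘ cσ.2)
      ↑(univ.filter (fun c : Fin p → ι => StrictMono c) ×ˢ
        (univ : Finset (Equiv.Perm (Fin p)))) := by
    rintro ⟨c, σ⟩ hcσ ⟨c', σ'⟩ hcσ' heq
    simp only [coe_product, coe_filter, mem_univ, true_and, Set.mem_prod, Set.mem_ofPred_eq,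
      coe_univ, Set.mem_univ, and_true] at hcσ hcσ' heq
    have hc : c = c' := (hcσ.range_inj hcσ').mp (by simpa using congrArg Set.range heq)
    subst hc
    exact Prod.ext rfl (Equiv.ext fun i => hcσ.injective (congrFun heq i))
  rw [← sum_image hinj]
  refine (sum_subset (subset_univ _) fun g _ hg => hF g fun hginj => hg ?_).symm
  refine mem_image.mpr ⟨(g ∘ Tuple.sort g, (Tuple.sort g)⁻¹), ?_, ?_⟩
  · simpa using (Tuple.monotone_sort g).strictMono_of_injective
      (hginj.comp (Tuple.sort g).injective)
  · ext i; simp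

namespace Matrix

variable {R ι : Type*} [CommRing R] [Fintype ι]

theorem det_mul_eq_sum_prod_mul_det_submatrix {m : Type*} [Fintype m] [DecidableEq m]
    (M : Matrix m ι R) (N : Matrix ι m R) :
    (M * N).det = ∑ g : m → ι, (∏ i, N (g i) i) * (M.submatrix id g).det := by
  simp only [det_apply', mul_apply, prod_univ_sum, Fintype.piFinset_univ, mul_sum,
    prod_mul_distrib, submatrix_apply, id_eq]
  rw [sum_comm]
  refine sum_congr rfl fun g _ => sum_congr rfl fun σ _ => ?_
  ring

open Classical in
/-- The Cauchy–Binet formula. -/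
theorem det_mul_eq_sum_strictMono [LinearOrder ι] {p : ℕ} (M : Matrix (Fin p) ι R)
    (N : Matrix ι (Fin p) R) :
    (M * N).det = ∑ c ∈ univ.filter (fun c : Fin p → ι => StrictMono c),
      (M.submatrix id c).det * (N.submatrix c id).det := by
  rw [det_mul_eq_sum_prod_mul_det_submatrix, sum_eq_sum_strictMono_sum_perm]
  · refine sum_congr rfl fun c _ => ?_
    have hperm : ∀ σ : Equiv.Perm (Fin p),
        (M.submatrix id (c ∘ σ)).det = Equiv.Perm.sign σ * (M.submatrix id c).det :=
      fun σ => det_permute' σ (M.submatrix id c)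
    simp only [hperm, det_apply' (N.submatrix c id), mul_sum, submatrix_apply, id_eq,
      Function.comp_apply]
    refine sum_congr rfl fun σ _ => ?_
    ring
  · intro g hg
    obtain ⟨a, b, hab, hne⟩ := Function.not_injective_iff.mp hg
    rw [det_zero_of_column_eq hne fun i => by simp [hab], mul_zero]

end Matrix

theorem IsPrimitiveRoot.sum_nthRootsFinset_zpow_eq_zero {F : Type*} [Field F] {ζ : F} {n : ℕ}
    (hζ : IsPrimitiveRoot ζ n) (c : F) {e : ℤ} (he : ¬ (n : ℤ) ∣ e) :
    ∑ z ∈ nthRootsFinset n c, z ^ e = 0 := by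
  obtain rfl | hn := n.eq_zero_or_pos
  · simp
  have hζ0 : ζ ≠ 0 := hζ.ne_zero hn.ne'
  have hmul : ∀ {a : F}, a ∈ nthRootsFinset n 1 → ∀ z ∈ nthRootsFinset n c,
      a * z ∈ nthRootsFinset n c := fun ha z hz => by
    simpa using mul_mem_nthRootsFinset ha hz
  have hinvariant :
      ∑ z ∈ nthRootsFinset n c, z ^ e = ζ ^ e * ∑ z ∈ nthRootsFinset n c, z ^ e := by
    rw [mul_sum]
    refine sum_nbij' (ζ⁻¹ * ·) (ζ * ·) (hmul ?_) (hmul ?_) (fun z _ => ?_) (fun z _ => ?_)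
      (fun z _ => ?_)
    · exact hζ.inv.mem_nthRootsFinset hn
    · exact hζ.mem_nthRootsFinset hn
    · simp [hζ0]
    · simp [hζ0]
    · rw [mul_zpow, inv_zpow, mul_inv_cancel_left₀ (zpow_ne_zero e hζ0)]
  have hζe : ζ ^ e ≠ 1 := fun h => he ((hζ.zpow_eq_one_iff_dvd e).mp h)
  have hfactor : (ζ ^ e - 1) * ∑ z ∈ nthRootsFinset n c, z ^ e = 0 := by
    linear_combination -hinvariant
  exact (mul_eq_zero.mp hfactor).resolve_left (sub_ne_zero.mpr hζe)

theorem Polynomial.image_eq_nthRootsFinset {R : Type*} [CommRing R] [IsDomain R] [DecidableEq R]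
    {ι : Type*} [Fintype ι] {n : ℕ} {c : R} {y : ι → R} (hy : Function.Injective y)
    (hcard : Fintype.card ι = n) (hroot : ∀ i, y i ^ n = c) :
    univ.image y = nthRootsFinset n c := by
  have hsub : univ.image y ⊆ nthRootsFinset n c := by
    intro z hz
    obtain ⟨i, -, rfl⟩ := mem_image.mp hz
    have hn : 0 < n := hcard ▸ Fintype.card_pos_iff.mpr ⟨i⟩
    exact (mem_nthRootsFinset hn c).mpr (hroot i)
  refine eq_of_subset_of_card_le hsub ?_
  calc (nthRootsFinset n c).card ≤ Multiset.card (nthRoots n c) := by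
        rw [nthRootsFinset_def]; exact Multiset.toFinset_card_le _
    _ ≤ n := card_nthRoots n c
    _ = (univ.image y).card := by rw [card_image_of_injective _ hy, card_univ, hcard]

theorem sum_zpow_natCast_add_eq_ite {F : Type*} [Field F] {ι : Type*} [Fintype ι] {n : ℕ}
    {ζ : F} (hζ : IsPrimitiveRoot ζ n) {c : F} {y : ι → F} (hy : Function.Injective y)
    (hcard : Fintype.card ι = n) (hroot : ∀ i, y i ^ n = c) {d : ℤ} (hd : |d| < n) :
    ∑ i, y i ^ ((n : ℤ) + d) = if d = 0 then n * c else 0 := by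
  split_ifs with h0
  · simp [h0, hroot, hcard]
  classical
  rw [← sum_image (f := (· ^ ((n : ℤ) + d))) hy.injOn, image_eq_nthRootsFinset hy hcard hroot]
  refine hζ.sum_nthRootsFinset_zpow_eq_zero c fun hdvd => h0 ?_
  exact Int.eq_zero_of_abs_lt_dvd ((dvd_add_right (dvd_refl _)).mp hdvd) hd

section zpowMatrix

variable {F : Type*} [Field F] {ι κ : Type*}

def zpowMatrix (a : κ → ℤ) (y : ι → F) : Matrix κ ι F :=
  Matrix.of fun i x => y x ^ a i

theorem zpowMatrix_mul_transpose_apply [Fintype ι] {κ' : Type*} {y : ι → F}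
    (hy : ∀ x, y x ≠ 0) (a : κ → ℤ) (b : κ' → ℤ) (i : κ) (j : κ') :
    (zpowMatrix a y * (zpowMatrix b y)ᵀ) i j = ∑ x, y x ^ (a i + b j) := by
  simp only [zpowMatrix, Matrix.mul_apply, Matrix.transpose_apply, Matrix.of_apply,
    zpow_add₀ (hy _)]

theorem zpowMatrix_mul_transpose_eq_smul_reverse [Fintype ι] {n p : ℕ} (hpn : p ≤ n) {ζ : F}
    (hζ : IsPrimitiveRoot ζ n) {c : F} {y : ι → F} (hy : Function.Injective y)
    (hy0 : ∀ x, y x ≠ 0) (hcard : Fintype.card ι = n) (hroot : ∀ i, y i ^ n = c) :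
    zpowMatrix (fun i : Fin p => (n : ℤ) - ((i : ℕ) + 1)) y *
        (zpowMatrix (fun j : Fin p => (p : ℤ) - (j : ℕ)) y)ᵀ =
      ((n : F) * c) • (1 : Matrix (Fin p) (Fin p) F).submatrix id Fin.revPerm := by
  ext i j
  have hexp : (n : ℤ) - ((i : ℕ) + 1) + ((p : ℤ) - (j : ℕ)) = n + ((p : ℤ) - 1 - i - j) :=
    by ring
  have hd : |(p : ℤ) - 1 - i - j| < n := abs_lt.mpr ⟨by omega, by omega⟩
  rw [zpowMatrix_mul_transpose_apply hy0, hexp,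
    sum_zpow_natCast_add_eq_ite hζ hy hcard hroot hd]
  simp only [Matrix.smul_apply, Matrix.submatrix_apply, Matrix.one_apply, id_eq,
    Fin.revPerm_apply, Fin.ext_iff, Fin.val_rev, smul_eq_mul]
  split_ifs <;> first | omega | simp

end zpowMatrix

theorem Dfun_eq_det_zpowMatrix_mul {m p : ℕ} {y : Fin (m + p) → ℂ} (hy0 : ∀ x, y x ≠ 0)
    {K : Fin p → ℤ} (hsum : ∑ j : Fin p, (K j - ((j : ℕ) + 1)) = 0) :
    Dfun m p y K = ((-1 : ℂ) ^ p.choose 2 / ((m + p : ℕ) : ℂ) ^ p) *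
      (zpowMatrix (fun i => ((m + p : ℕ) : ℤ) - K i) y *
        (zpowMatrix (fun j : Fin p => (p : ℤ) - (j : ℕ)) y)ᵀ).det := by
  classical
  rw [Dfun, Matrix.det_mul_eq_sum_strictMono, hsum]
  congr 1
  refine sum_congr (filter_congr fun c _ => Iff.rfl) fun c _ => ?_
  have habsorb : (∏ j, y (c j)) *
      (Matrix.of fun i j : Fin p => y (c i) ^ ((p : ℤ) - 1 - (j : ℕ))).det =
      ((zpowMatrix (fun j : Fin p => (p : ℤ) - (j : ℕ)) y)ᵀ.submatrix c id).det := by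
    rw [← Matrix.det_mul_column]
    congr 1
    ext i j
    simp only [Matrix.of_apply, Matrix.submatrix_apply, Matrix.transpose_apply, zpowMatrix, id_eq,
      ← zpow_one_add₀ (hy0 _)]
    ring_nf
  rw [zpow_zero, mul_one, mul_right_comm, habsorb, mul_comm]
  rfl

/-- Let `n = m+p` and `y_1, …, y_n` be the `n`-th roots of `(-1)^{p+1}`.  For a
strictly increasing sequence `K = (k_1 < ⋯ < k_p)` of positive integers with
`∑_j (k_j - j) = 0` and `k_p < k_1 + n`, `D(K) = 1` if `K = (1,2,…,p)` and
`D(K) = 0` otherwise. -/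
theorem Dfun_initial_values (m p : ℕ) (hp : 0 < p)
    (y : Fin (m + p) → ℂ) (hinj : Function.Injective y)
    (hroot : ∀ i, y i ^ (m + p) = (-1 : ℂ) ^ (p + 1))
    (K : Fin p → ℤ) (hmono : StrictMono K) (hpos : ∀ j, 1 ≤ K j)
    (hsum : ∑ j : Fin p, (K j - ((j : ℕ) + 1)) = 0) :
    Dfun m p y K = if ∀ j : Fin p, K j = (j : ℕ) + 1 then 1 else 0 := by
  have hK : ∀ j, K j = (j : ℕ) + 1 := hmono.eq_val_add_one_of_sum_eq_zero hpos hsum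
  have hn : m + p ≠ 0 := by omega
  have hy0 : ∀ x, y x ≠ 0 := fun x h =>
    pow_ne_zero (p + 1) (neg_ne_zero.mpr one_ne_zero) (by rw [← hroot x, h, zero_pow hn])
  have hprod := zpowMatrix_mul_transpose_eq_smul_reverse (p := p) (Nat.le_add_left p m)
    (Complex.isPrimitiveRoot_exp _ hn) hinj hy0 (Fintype.card_fin _) hroot
  rw [if_pos hK, Dfun_eq_det_zpowMatrix_mul hy0 hsum, funext hK, hprod, Matrix.det_smul,
    Matrix.det_permute', Matrix.det_one, Fin.sign_revPerm, Fintype.card_fin]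
  have hsign : ((-1 : ℂ) ^ (p + 1)) ^ p = 1 := by
    rw [← pow_mul, mul_comm, Even.neg_one_pow (Nat.even_mul_succ_self p)]
  have hn' : ((m : ℂ) + p) ^ p ≠ 0 := by exact_mod_cast pow_ne_zero p hn
  push_cast
  rw [mul_pow, hsign]
  field_simp
  rw [← pow_mul, Even.neg_one_pow (even_two.mul_left _)]
end
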